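/- arXiv:2403.15515 — 4 statements merged into one kernel-verified Lean document; each statement's English description precedes it below -/
import Mathlib

section
/- Let τ ∈ M(n;ℝ) be an alternating (skew-symmetric) matrix, and let B = [[τ, 0],[0, 0]] ∈ M(2n;ℝ). Define the B-field transform 𝓘_T(B) = C_{-B} · 𝓘_T · C_B, where C_B = [[I_{2n}, 0],[B, I_{2n}]] and 𝓘_T = diag(I_T, -I_Tᵗ). Then 𝓘_T(B) = 𝓘_T if and only if τ = 0. -/
open Matrix

theorem stmt2 (n : ℕ) (X Y : Matrix (Fin n) (Fin n) ℝ) (hY : Y.PosDef)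
    (hT : (X.map (Complex.ofReal) + Complex.I • Y.map (Complex.ofReal)).det ≠ 0)
    (τ : Matrix (Fin n) (Fin n) ℝ) (hτ : τᵀ = -τ) :
    letI I_T : Matrix (Fin n ⊕ Fin n) (Fin n ⊕ Fin n) ℝ :=
      Matrix.fromBlocks (-(X * Y⁻¹)) (-(Y + X * Y⁻¹ * X)) (Y⁻¹) (Y⁻¹ * X)
    letI 𝓘 : Matrix ((Fin n ⊕ Fin n) ⊕ (Fin n ⊕ Fin n)) ((Fin n ⊕ Fin n) ⊕ (Fin n ⊕ Fin n)) ℝ :=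
      Matrix.fromBlocks I_T 0 0 (-(I_Tᵀ))
    letI B : Matrix (Fin n ⊕ Fin n) (Fin n ⊕ Fin n) ℝ := Matrix.fromBlocks τ 0 0 0
    (Matrix.fromBlocks 1 0 (-B) 1) * 𝓘 * (Matrix.fromBlocks 1 0 B 1) = 𝓘 ↔ τ = 0 := by
  set I_T := Matrix.fromBlocks (-(X * Y⁻¹)) (-(Y + X * Y⁻¹ * X)) (Y⁻¹) (Y⁻¹ * X) with hITd
  set B := (Matrix.fromBlocks τ 0 0 0 : Matrix (Fin n ⊕ Fin n) (Fin n ⊕ Fin n) ℝ) with hBd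
  set 𝓘 := Matrix.fromBlocks I_T 0 0 (-(I_Tᵀ)) with h𝓘d
  -- basic facts
  have hYdet : Y.det ≠ 0 := ne_of_gt hY.det_pos
  set c : ℝ →+* ℂ := Complex.ofRealHom
  set Xc := X.map c with hXc
  set Yc := Y.map c with hYc
  have hYcdet : Yc.det ≠ 0 := by
    rw [hYc, ← RingHom.mapMatrix_apply, ← RingHom.map_det]
    simpa using hYdet
  have hYcu : IsUnit Yc.det := isUnit_iff_ne_zero.2 hYcdet
  have hinvmap : (Y⁻¹).map c = Yc⁻¹ := by
    have h1 : Yc * (Y⁻¹).map c = 1 := by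
      rw [hYc, ← Matrix.map_mul, Matrix.mul_nonsing_inv _ (isUnit_iff_ne_zero.2 hYdet)]
      simp
    exact (Matrix.inv_eq_right_inv h1).symm
  -- the key factorization
  have hfact : (Xc + Complex.I • Yc) * Yc⁻¹ * (Xc - Complex.I • Yc)
      = Yc + Xc * Yc⁻¹ * Xc := by
    simp only [mul_sub, sub_mul, add_mul, mul_add, smul_mul_assoc, mul_smul_comm,
      smul_smul, Complex.I_mul_I, neg_one_smul,
      Matrix.mul_nonsing_inv _ hYcu, Matrix.nonsing_inv_mul _ hYcu,
      Matrix.mul_nonsing_inv_cancel_right _ _ hYcu,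
      Matrix.nonsing_inv_mul_cancel_right _ _ hYcu, one_mul, mul_one,
      smul_add, neg_mul, neg_smul, one_smul, neg_neg, ← hXc, ← hYc]
    abel
  -- conjugate determinant nonzero
  have hconj : (Xc - Complex.I • Yc) = (Xc + Complex.I • Yc).map (starRingEnd ℂ) := by
    ext i j
    simp [hXc, hYc, Matrix.map_apply, c, sub_eq_add_neg]
  have hT' : (Xc + Complex.I • Yc).det ≠ 0 := hT
  have hdet2 : (Xc - Complex.I • Yc).det ≠ 0 := by
    rw [hconj, ← RingHom.mapMatrix_apply, ← RingHom.map_det]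
    simpa using hT'
  -- det of Y + X Y⁻¹ X is nonzero
  have hMdet : (Y + X * Y⁻¹ * X).det ≠ 0 := by
    have hmap : (Y + X * Y⁻¹ * X).map c = Yc + Xc * Yc⁻¹ * Xc := by
      rw [Matrix.map_add _ (fun a b => map_add c a b), Matrix.map_mul, Matrix.map_mul,
        hinvmap, ← hXc, ← hYc]
    have : c ((Y + X * Y⁻¹ * X).det) ≠ 0 := by
      rw [RingHom.map_det, RingHom.mapMatrix_apply, hmap, ← hfact, det_mul, det_mul,
        Matrix.det_nonsing_inv, Ring.inverse_eq_inv]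
      exact mul_ne_zero (mul_ne_zero hT' (inv_ne_zero hYcdet)) hdet2
    intro h
    exact this (by rw [h]; simp)
  constructor
  · intro hEq
    -- multiply on the left by C_B to get commutation
    have hCB : (Matrix.fromBlocks 1 0 B 1 : Matrix ((Fin n ⊕ Fin n) ⊕ (Fin n ⊕ Fin n))
        ((Fin n ⊕ Fin n) ⊕ (Fin n ⊕ Fin n)) ℝ) * Matrix.fromBlocks 1 0 (-B) 1 = 1 := by
      rw [Matrix.fromBlocks_multiply]
      simp [Matrix.fromBlocks_one]
    have hcomm : 𝓘 * Matrix.fromBlocks 1 0 B 1 = Matrix.fromBlocks 1 0 B 1 * 𝓘 := by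
      calc 𝓘 * Matrix.fromBlocks 1 0 B 1
          = (Matrix.fromBlocks 1 0 B 1 * Matrix.fromBlocks 1 0 (-B) 1) *
            (𝓘 * Matrix.fromBlocks 1 0 B 1) := by rw [hCB, one_mul]
        _ = Matrix.fromBlocks 1 0 B 1 *
            ((Matrix.fromBlocks 1 0 (-B) 1) * 𝓘 * Matrix.fromBlocks 1 0 B 1) := by
            noncomm_ring
        _ = Matrix.fromBlocks 1 0 B 1 * 𝓘 := by rw [hEq]
    -- extract block (2,1)
    have h21 : -(I_Tᵀ) * B = B * I_T := by
      have h1 : 𝓘 * Matrix.fromBlocks 1 0 B 1 =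
          Matrix.fromBlocks I_T 0 (-(I_Tᵀ) * B) (-(I_Tᵀ)) := by
        rw [h𝓘d, Matrix.fromBlocks_multiply]; simp
      have h2 : Matrix.fromBlocks 1 0 B 1 * 𝓘 =
          Matrix.fromBlocks I_T 0 (B * I_T) (-(I_Tᵀ)) := by
        rw [h𝓘d, Matrix.fromBlocks_multiply]; simp
      have := hcomm
      rw [h1, h2] at this
      have := congrArg Matrix.toBlocks₂₁ this
      simpa [Matrix.toBlocks_fromBlocks₂₁] using this
    -- extract block (1,2) of h21
    have h12 : (0 : Matrix (Fin n) (Fin n) ℝ) = τ * -(Y + X * Y⁻¹ * X) := by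
      have hL : -(I_Tᵀ) * B =
          Matrix.fromBlocks (-((-(X * Y⁻¹))ᵀ * τ + (Y⁻¹)ᵀ * 0)) (-(0 : Matrix (Fin n) (Fin n) ℝ))
            (-((-(Y + X * Y⁻¹ * X))ᵀ * τ + (Y⁻¹ * X)ᵀ * 0)) (-(0 : Matrix (Fin n) (Fin n) ℝ)) := by
        rw [hITd, hBd, Matrix.fromBlocks_transpose, neg_mul, Matrix.fromBlocks_multiply,
          Matrix.fromBlocks_neg]
        congr 1 <;> simp
      have hR : B * I_T =
          Matrix.fromBlocks (τ * -(X * Y⁻¹)) (τ * -(Y + X * Y⁻¹ * X)) 0 0 := by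
        rw [hITd, hBd, Matrix.fromBlocks_multiply]; simp
      have h := h21
      rw [hL, hR] at h
      have h' := congrArg Matrix.toBlocks₁₂ h
      rw [Matrix.toBlocks_fromBlocks₁₂, Matrix.toBlocks_fromBlocks₁₂, neg_zero] at h'
      exact h'
    have hτM : τ * (Y + X * Y⁻¹ * X) = 0 := by
      have h' := h12.symm
      rw [mul_neg, neg_eq_zero] at h'
      exact h'
    calc τ = τ * ((Y + X * Y⁻¹ * X) * (Y + X * Y⁻¹ * X)⁻¹) := by
            rw [Matrix.mul_nonsing_inv _ (isUnit_iff_ne_zero.2 hMdet), mul_one]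
      _ = (τ * (Y + X * Y⁻¹ * X)) * (Y + X * Y⁻¹ * X)⁻¹ := (mul_assoc _ _ _).symm
      _ = 0 := by rw [hτM, zero_mul]
  · intro h
    have hB : B = 0 := by
      rw [hBd, h]
      ext (i|i) (j|j) <;> simp
    rw [hB]
    simp [Matrix.fromBlocks_one]
end

section
/- Let T ∈ M(n;ℂ) with X = Re T, Y = Im T, Y positive definite and det T ≠ 0. Then det(Y + XY⁻¹X) ≠ 0, and the real and imaginary parts of -(T⁻¹)ᵗ are given by Re(-(T⁻¹)ᵗ) = -((Y + XY⁻¹X)⁻¹)ᵗ Xᵗ (Y⁻¹)ᵗ and Im(-(T⁻¹)ᵗ) = ((Y + XY⁻¹X)⁻¹)ᵗ. -/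
open Matrix

theorem stmt4 (n : ℕ) (X Y : Matrix (Fin n) (Fin n) ℝ) (hY : Y.PosDef)
    (hT : (X.map (Complex.ofReal) + Complex.I • Y.map (Complex.ofReal)).det ≠ 0) :
    letI T : Matrix (Fin n) (Fin n) ℂ :=
      X.map (Complex.ofReal) + Complex.I • Y.map (Complex.ofReal)
    (Y + X * Y⁻¹ * X).det ≠ 0 ∧
      (-(T⁻¹)ᵀ).map Complex.re = -(((Y + X * Y⁻¹ * X)⁻¹)ᵀ * Xᵀ * (Y⁻¹)ᵀ) ∧
      (-(T⁻¹)ᵀ).map Complex.im = ((Y + X * Y⁻¹ * X)⁻¹)ᵀ := by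
  set T : Matrix (Fin n) (Fin n) ℂ := X.map Complex.ofReal + Complex.I • Y.map Complex.ofReal with hTdef
  set f : ℝ →+* ℂ := Complex.ofRealHom with hf
  have hmap : ∀ A : Matrix (Fin n) (Fin n) ℝ, A.map Complex.ofReal = A.map f := fun A => rfl
  have hYdet : IsUnit Y.det := (ne_of_gt hY.det_pos).isUnit
  set Z : Matrix (Fin n) (Fin n) ℝ := Y + X * Y⁻¹ * X with hZ
  have hmul : ∀ A B : Matrix (Fin n) (Fin n) ℝ,
      (A.map f) * (B.map f) = (A * B).map f := fun A B => (Matrix.map_mul).symm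
  have hadd : ∀ A B : Matrix (Fin n) (Fin n) ℝ,
      (A.map f) + (B.map f) = (A + B).map f := by
    intro A B; ext i j; simp [Matrix.map_apply, Matrix.add_apply]
  have hone : (1 : Matrix (Fin n) (Fin n) ℝ).map f = 1 :=
    Matrix.map_one f (map_zero f) (map_one f)
  have expand : ∀ A B C D : Matrix (Fin n) (Fin n) ℂ,
      (A + Complex.I • B) * (C - Complex.I • D)
        = (A * C + B * D) + Complex.I • (B * C - A * D) := by
    intro A B C D
    rw [Matrix.add_mul, Matrix.mul_sub, Matrix.smul_mul, Matrix.mul_smul, Matrix.mul_sub,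
      Matrix.mul_smul, smul_sub, smul_smul, Complex.I_mul_I, neg_one_smul]
    module
  -- complexified identity : Z.map f = T * (Y⁻¹).map f * (X.map f - I • Y.map f)
  have hZf : Z.map f = T * ((Y⁻¹).map f) * (X.map f + Complex.I • Y.map f).map (starRingEnd ℂ) := by
    have hstar : (X.map f + Complex.I • Y.map f).map (starRingEnd ℂ)
        = X.map f - Complex.I • Y.map f := by
      ext i j
      simp [hf, Matrix.map_apply, Matrix.add_apply, Matrix.sub_apply, Matrix.smul_apply,
        Complex.conj_ofReal]
      ring
    rw [hstar]
    show Z.map f = (X.map f + Complex.I • Y.map f) * ((Y⁻¹).map f)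
      * (X.map f - Complex.I • Y.map f)
    have h0 : (X.map f + Complex.I • Y.map f) * ((Y⁻¹).map f)
        = (X * Y⁻¹).map f + Complex.I • ((1 : Matrix (Fin n) (Fin n) ℝ).map f) := by
      rw [Matrix.add_mul, Matrix.smul_mul, hmul, hmul, Matrix.mul_nonsing_inv Y hYdet]
    rw [h0, hone, expand]
    simp only [Matrix.one_mul]
    rw [hmul, hmul]
    have e1 : X * Y⁻¹ * Y = X := Matrix.nonsing_inv_mul_cancel_right Y X hYdet
    rw [e1, sub_self, smul_zero, add_zero, hadd, hZ]
    rw [show X * Y⁻¹ * X + Y = Y + X * Y⁻¹ * X from add_comm _ _]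
  have hZdet : Z.det ≠ 0 := by
    intro h
    have h0 : (Z.map f).det = 0 := by
      rw [← RingHom.mapMatrix_apply, ← RingHom.map_det, h, map_zero]
    rw [hZf, Matrix.det_mul, Matrix.det_mul] at h0
    rcases mul_eq_zero.mp h0 with hd | hd
    · rcases mul_eq_zero.mp hd with hd | hd
      · exact hT hd
      · rw [← RingHom.mapMatrix_apply, ← RingHom.map_det] at hd
        have h1 : (Y⁻¹).det = 0 := by
          simpa [hf, Complex.ofReal_eq_zero] using hd
        exact (Matrix.isUnit_nonsing_inv_det Y hYdet).ne_zero h1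
    · rw [← RingHom.mapMatrix_apply, ← RingHom.map_det] at hd
      exact hT (star_eq_zero.mp hd)
  have hZunit : IsUnit Z.det := hZdet.isUnit
  -- right inverse of T
  have hTS : T * ((Y⁻¹ * X * Z⁻¹).map f - Complex.I • ((Z⁻¹).map f)) = 1 := by
    show (X.map f + Complex.I • Y.map f) * _ = 1
    rw [expand, hmul, hmul, hmul, hmul, hadd]
    have eA : X * (Y⁻¹ * X * Z⁻¹) + Y * Z⁻¹ = 1 := by
      have h1 : X * (Y⁻¹ * X * Z⁻¹) = (X * Y⁻¹ * X) * Z⁻¹ := by noncomm_ring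
      rw [h1, ← Matrix.add_mul]
      have h2 : X * Y⁻¹ * X + Y = Z := by rw [hZ, add_comm]
      rw [h2, Matrix.mul_nonsing_inv Z hZunit]
    have eB : Y * (Y⁻¹ * X * Z⁻¹) - X * Z⁻¹ = 0 := by
      rw [← Matrix.mul_assoc, ← Matrix.mul_assoc, Matrix.mul_nonsing_inv Y hYdet,
        Matrix.one_mul, sub_self]
    rw [eA, hone]
    have h3 : (Y * (Y⁻¹ * X * Z⁻¹)).map f - (X * Z⁻¹).map f = 0 := by
      ext i j
      have h4 := congrFun (congrFun eB i) j
      simp only [Matrix.sub_apply, Matrix.zero_apply, Matrix.map_apply] at h4 ⊢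
      rw [← map_sub, h4, map_zero]
    rw [h3, smul_zero, add_zero]
  have hTinv : T⁻¹ = (Y⁻¹ * X * Z⁻¹).map f - Complex.I • ((Z⁻¹).map f) :=
    Matrix.inv_eq_right_inv hTS
  refine ⟨hZdet, ?_, ?_⟩
  · rw [hTinv]
    have htr : (Z⁻¹)ᵀ * Xᵀ * (Y⁻¹)ᵀ = (Y⁻¹ * X * Z⁻¹)ᵀ := by
      rw [Matrix.transpose_mul, Matrix.transpose_mul, Matrix.mul_assoc]
    rw [htr, Matrix.transpose_sub, Matrix.transpose_smul, ← Matrix.transpose_map,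
      ← Matrix.transpose_map]
    ext i j
    simp only [hf, Matrix.map_apply, Matrix.neg_apply, Matrix.sub_apply, Matrix.smul_apply,
      Matrix.transpose_apply, smul_eq_mul, Complex.sub_re, Complex.mul_re, Complex.I_re,
      Complex.I_im, Complex.ofReal_re, Complex.ofReal_im, Complex.neg_re,
      Complex.ofRealHom_eq_coe]
    ring
  · rw [hTinv, Matrix.transpose_sub, Matrix.transpose_smul, ← Matrix.transpose_map,
      ← Matrix.transpose_map]
    ext i j
    simp only [hf, Matrix.map_apply, Matrix.neg_apply, Matrix.sub_apply, Matrix.smul_apply,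
      Matrix.transpose_apply, smul_eq_mul, Complex.sub_im, Complex.mul_im, Complex.I_re,
      Complex.I_im, Complex.ofReal_re, Complex.ofReal_im, Complex.neg_im,
      Complex.ofRealHom_eq_coe]
    ring
end

section
/- Let T = X + iY with Y positive definite and det T ≠ 0. Then the inverse of T can be written as T⁻¹ = (Y + XY⁻¹X)⁻¹ XY⁻¹ - i(Y + XY⁻¹X)⁻¹, where Y + XY⁻¹X is invertible. -/
open Matrix

theorem stmt5 (n : ℕ) (X Y : Matrix (Fin n) (Fin n) ℝ) (hY : Y.PosDef)
    (hT : (X.map (Complex.ofReal) + Complex.I • Y.map (Complex.ofReal)).det ≠ 0) :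
    letI T : Matrix (Fin n) (Fin n) ℂ :=
      X.map (Complex.ofReal) + Complex.I • Y.map (Complex.ofReal)
    IsUnit (Y + X * Y⁻¹ * X).det ∧
      T⁻¹ = ((Y + X * Y⁻¹ * X)⁻¹ * X * Y⁻¹).map (Complex.ofReal) -
        Complex.I • ((Y + X * Y⁻¹ * X)⁻¹).map (Complex.ofReal) := by
  set f : ℝ →+* ℂ := Complex.ofRealHom with hf
  have hdetf : ∀ M : Matrix (Fin n) (Fin n) ℝ, (M.map f).det = f M.det := fun M => by
    rw [RingHom.map_det, RingHom.mapMatrix_apply]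
  set T : Matrix (Fin n) (Fin n) ℂ := X.map f + Complex.I • Y.map f with hTd
  have hYdet : IsUnit Y.det := isUnit_iff_ne_zero.mpr hY.det_pos.ne'
  set A : Matrix (Fin n) (Fin n) ℝ := Y + X * Y⁻¹ * X with hA
  have hYY : Y * Y⁻¹ = 1 := mul_nonsing_inv Y hYdet
  have hYmapinv : (Y.map f) * (Y⁻¹.map f) = 1 := by
    rw [← Matrix.map_mul, hYY, Matrix.map_one f (map_zero f) (map_one f)]
  have hYinvY : (Y⁻¹.map f) * (Y.map f) = 1 := by
    rw [← Matrix.map_mul, nonsing_inv_mul Y hYdet, Matrix.map_one f (map_zero f) (map_one f)]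
  have hdetYinv : (Y⁻¹.map f).det ≠ 0 := by
    intro h
    have := Matrix.det_mul (Y.map f) (Y⁻¹.map f)
    rw [hYmapinv, h, mul_zero, Matrix.det_one] at this
    exact one_ne_zero this
  have hconj : X.map f - Complex.I • Y.map f = T.map (starRingEnd ℂ) := by
    ext i j
    simp only [hTd, Matrix.sub_apply, Matrix.add_apply, Matrix.smul_apply, Matrix.map_apply,
      smul_eq_mul, _root_.map_add, _root_.map_mul, Complex.conj_I]
    simp [f, Complex.conj_ofReal]
    ring
  have hdetconj : (X.map f - Complex.I • Y.map f).det ≠ 0 := by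
    rw [hconj]
    have : (T.map (starRingEnd ℂ)).det = starRingEnd ℂ T.det := by
      rw [RingHom.map_det, RingHom.mapMatrix_apply]
    rw [this]
    intro h
    exact hT (by have h' : T.det = 0 := by simpa using congrArg (starRingEnd ℂ) h
                 exact h')
  have hfact : (X.map f - Complex.I • Y.map f) * (Y⁻¹.map f) * T = A.map f := by
    rw [hTd, hA, Matrix.map_add f (map_add f), Matrix.map_mul, Matrix.map_mul]
    simp only [sub_mul, mul_add, add_mul, smul_mul_assoc, mul_smul_comm, smul_smul,
      Complex.I_mul_I, neg_one_smul, smul_sub, hYmapinv, one_mul]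
    rw [mul_assoc (X.map f) (Y⁻¹.map f) (Y.map f), hYinvY, mul_one]
    abel
  have hdetA : A.det ≠ 0 := by
    intro h
    have h0 : (A.map f).det = 0 := by rw [hdetf, h, map_zero]
    rw [← hfact] at h0
    simp only [Matrix.det_mul] at h0
    rcases mul_eq_zero.mp h0 with h1 | h1
    · rcases mul_eq_zero.mp h1 with h2 | h2
      · exact hdetconj h2
      · exact hdetYinv h2
    · exact hT h1
  have hAunit : IsUnit A.det := isUnit_iff_ne_zero.mpr hdetA
  refine ⟨hAunit, ?_⟩
  have hAmapdet : IsUnit (A.map f).det := by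
    rw [hdetf]
    exact isUnit_iff_ne_zero.mpr (by simpa [f] using hdetA)
  have hAinvmap : (A.map f)⁻¹ = A⁻¹.map f := by
    apply inv_eq_right_inv
    rw [← Matrix.map_mul, mul_nonsing_inv A hAunit, Matrix.map_one f (map_zero f) (map_one f)]
  have hTinv : T⁻¹ = (A.map f)⁻¹ * ((X.map f - Complex.I • Y.map f) * (Y⁻¹.map f)) := by
    apply inv_eq_left_inv
    rw [mul_assoc, hfact, nonsing_inv_mul _ hAmapdet]
  show T⁻¹ = (A⁻¹ * X * Y⁻¹).map f - Complex.I • A⁻¹.map f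
  rw [hTinv, hAinvmap]
  rw [sub_mul, mul_sub, smul_mul_assoc, mul_smul_comm]
  congr 1
  · rw [← Matrix.map_mul, ← Matrix.map_mul, ← mul_assoc]
  · rw [← Matrix.map_mul, hYY, Matrix.map_one f (map_zero f) (map_one f), mul_one]
end

section
/- Let T ∈ M(n;ℂ) be invertible with Im T invertible, and let S ∈ M(n;ℝ). Then the condition ω_mat·S = (ω_mat·S)ᵗ together with B_mat·S = (B_mat·S)ᵗ, where ω_mat = Im(-(T⁻¹)ᵗ) and B_mat = Re(-(T⁻¹)ᵗ), holds if and only if S·T = (S·T)ᵗ. -/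
open Matrix

theorem stmt10 (n : ℕ) (T : Matrix (Fin n) (Fin n) ℂ) (hT : IsUnit T.det)
    (hIm : IsUnit (T.map Complex.im).det) (S : Matrix (Fin n) (Fin n) ℝ) :
    (((-(T⁻¹)ᵀ).map Complex.im * S).IsSymm ∧ ((-(T⁻¹)ᵀ).map Complex.re * S).IsSymm) ↔
      ((S.map Complex.ofReal) * T).IsSymm := by
  have hinv := T.invertibleOfIsUnitDet hT
  set S' : Matrix (Fin n) (Fin n) ℂ := S.map Complex.ofReal with hS'
  set U : Matrix (Fin n) (Fin n) ℂ := -(T⁻¹)ᵀ with hU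
  have him : ∀ i j, (U.map Complex.im * S) i j = ((U * S') i j).im := by
    intro i j
    simp [Matrix.mul_apply, hS', Complex.im_sum]
  have hre : ∀ i j, (U.map Complex.re * S) i j = ((U * S') i j).re := by
    intro i j
    simp [Matrix.mul_apply, hS', Complex.re_sum]
  have key : (((U.map Complex.im) * S).IsSymm ∧ ((U.map Complex.re) * S).IsSymm) ↔
      (U * S').IsSymm := by
    constructor
    · rintro ⟨h1, h2⟩
      refine Matrix.IsSymm.ext fun i j => Complex.ext ?_ ?_
      · rw [← hre, ← hre]; exact h2.apply i j
      · rw [← him, ← him]; exact h1.apply i j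
    · intro h
      constructor
      · refine Matrix.IsSymm.ext fun i j => ?_
        rw [him, him, h.apply i j]
      · refine Matrix.IsSymm.ext fun i j => ?_
        rw [hre, hre, h.apply i j]
  rw [key]
  -- now algebra
  have hU' : (U * S').IsSymm ↔ (T⁻¹)ᵀ * S' = S'ᵀ * T⁻¹ := by
    unfold Matrix.IsSymm
    rw [hU]
    constructor
    · intro h
      have := h.symm
      rw [transpose_mul, transpose_neg, transpose_transpose, neg_mul, mul_neg, neg_inj] at this
      exact this
    · intro h
      rw [transpose_mul, transpose_neg, transpose_transpose, neg_mul, mul_neg, neg_inj, h]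
  rw [hU']
  unfold Matrix.IsSymm
  rw [transpose_mul]
  have e1 : Tᵀ * (T⁻¹)ᵀ = 1 := by
    rw [← transpose_mul, Matrix.nonsing_inv_mul T hT, transpose_one]
  have e2 : (T⁻¹)ᵀ * Tᵀ = 1 := by
    rw [← transpose_mul, Matrix.mul_nonsing_inv T hT, transpose_one]
  constructor
  · intro h
    have := congrArg (fun M => Tᵀ * M * T) h
    simp only [← Matrix.mul_assoc, e1, Matrix.one_mul] at this
    rw [Matrix.mul_assoc, Matrix.nonsing_inv_mul T hT, Matrix.mul_one] at this
    exact this.symm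
  · intro h
    have := congrArg (fun M => (T⁻¹)ᵀ * M * T⁻¹) h.symm
    simp only [← Matrix.mul_assoc, e2, Matrix.one_mul] at this
    rw [Matrix.mul_assoc, Matrix.mul_nonsing_inv T hT, Matrix.mul_one] at this
    exact this
end
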